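/- For a long positive root γ, the number of positive roots ν such that ν − γ is a positive root equals (ρ, θ∨) − (ρ, γ∨), where θ is the highest root. In particular, in the simply-laced case this number equals ht(θ) − ht(γ) = h − 1 − ht(γ), where h is the Coxeter number. -/

import Mathlib

open scoped RealInnerProductSpace

/-- Data of a crystallographic root system in a real inner product space `V`,
with simple roots indexed by a finite type `ι`. -/
structure RSD (ι V : Type*) [Fintype ι] [NormedAddCommGroup V]
    [InnerProductSpace ℝ V] where
  /-- The simple roots. -/
  sroot : ι → V
  /-- The set of roots. -/
  Δ : Set V
  finite : Δ.Finite
  zero_not_mem : (0 : V) ∉ Δ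
  sroot_mem : ∀ i, sroot i ∈ Δ
  sroot_indep : LinearIndependent ℝ sroot
  neg_mem : ∀ a ∈ Δ, -a ∈ Δ
  /-- Crystallographic condition. -/
  crys : ∀ a ∈ Δ, ∀ b ∈ Δ, ∃ n : ℤ, 2 * ⟪a, b⟫ / ⟪a, a⟫ = (n : ℝ)
  /-- The reflection associated with a vector (only specified on roots). -/
  reflect : V → (V ≃ₗ[ℝ] V)
  reflect_apply : ∀ a ∈ Δ, ∀ v : V,
    reflect a v = v - (2 * ⟪a, v⟫ / ⟪a, a⟫) • a
  reflect_root_mem : ∀ a ∈ Δ, ∀ b ∈ Δ, reflect a b ∈ Δ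
  /-- Every root is a nonnegative or nonpositive integral combination of simple roots. -/
  decomp : ∀ a ∈ Δ, (∃ c : ι → ℕ, a = ∑ i, (c i : ℝ) • sroot i) ∨
      (∃ c : ι → ℕ, a = -∑ i, (c i : ℝ) • sroot i)
  /-- Irreducibility. -/
  irred : ∀ S T : Set V, S ∪ T = Δ → (∀ a ∈ S, ∀ b ∈ T, ⟪a, b⟫ = 0) →
      S = ∅ ∨ T = ∅

namespace RSD

variable {ι V : Type*} [Fintype ι] [NormedAddCommGroup V] [InnerProductSpace ℝ V]
  (R : RSD ι V)

/-- The set of positive roots. -/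
def pos : Set V := {a ∈ R.Δ | ∃ c : ι → ℕ, a = ∑ i, (c i : ℝ) • R.sroot i}

/-- `R.le μ γ` means `μ ≼ γ`, i.e. `γ - μ` is a nonnegative integral combination
of simple roots. -/
def le (μ γ : V) : Prop := ∃ c : ι → ℕ, γ - μ = ∑ i, (c i : ℝ) • R.sroot i

/-- The Weyl group, generated by the simple reflections. -/
def W : Subgroup (V ≃ₗ[ℝ] V) :=
  Subgroup.closure (Set.range fun i => R.reflect (R.sroot i))

/-- The inversion set `N(w) = {γ ∈ Δ⁺ ∣ w γ ∈ -Δ⁺}`. -/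
def N (w : V ≃ₗ[ℝ] V) : Set V := {γ ∈ R.pos | -(w γ) ∈ R.pos}

/-- The length of `w`: minimal length of an expression of `w` as a product of
simple reflections. -/
noncomputable def len (w : V ≃ₗ[ℝ] V) : ℕ :=
  sInf {n | ∃ l : List ι, l.length = n ∧
    (l.map fun i => R.reflect (R.sroot i)).prod = w}

/-- The coroot `a∨ = 2a/(a,a)`. -/
@[nolint unusedArguments]
noncomputable def coroot (_R : RSD ι V) (a : V) : V := (2 / ⟪a, a⟫) • a

/-- `ρ`, the half-sum of the positive roots. -/
noncomputable def rho : V :=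
  (2⁻¹ : ℝ) • ∑ a ∈ (R.finite.subset (fun a ha => ha.1 : R.pos ⊆ R.Δ)).toFinset, a

/-- `R.HtIs γ n` : the height of `γ` is `n`. -/
def HtIs (γ : V) (n : ℕ) : Prop :=
  ∃ c : ι → ℕ, γ = ∑ i, (c i : ℝ) • R.sroot i ∧ ∑ i, c i = n

/-- A long root: a root of maximal squared length. -/
def IsLong (γ : V) : Prop := γ ∈ R.Δ ∧ ∀ b ∈ R.Δ, ⟪b, b⟫ ≤ ⟪γ, γ⟫

/-- The highest root. -/
def IsHighest (θ : V) : Prop := θ ∈ R.pos ∧ ∀ γ ∈ R.pos, R.le γ θ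

/-- Simply-laced: all roots have the same length. -/
def SimplyLaced : Prop := ∀ a ∈ R.Δ, ∀ b ∈ R.Δ, ⟪a, a⟫ = ⟪b, b⟫

/-- A minimal inversion complete set. -/
def IsMICS (F : Set (V ≃ₗ[ℝ] V)) : Prop :=
  (∀ w ∈ F, w ∈ R.W) ∧ (⋃ w ∈ F, R.N w) = R.pos ∧
    ∀ F' ⊂ F, (⋃ w ∈ F', R.N w) ≠ R.pos

end RSD

/-!
For a long root `γ`, the pairings `⟪μ, γ∨⟫` with roots `μ ≠ ±γ` lie in `{-1, 0, 1}`. Hence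
`ν ↦ ν - γ` identifies `Φ_γ` with the positive roots pairing to `-1` with `γ∨`, and comparing
`∑_{μ ∈ Δ⁺} ⟪μ, γ∨⟫ = 2 (ρ, γ∨)` with `∑_{μ ∈ Δ⁺} |⟪μ, γ∨⟫|` gives
`|Φ_γ| + (ρ, γ∨) = ¼ ∑_{μ ∈ Δ} |⟪μ, γ∨⟫|`. The right side is invariant under reflections, and
simple reflections carry every long positive root to `θ`, where it equals `(ρ, θ∨)` since `θ` is
dominant. In the simply-laced case `(ρ, α∨) = 1` for simple roots `α`, so `(ρ, γ∨) = ht γ`.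
-/

theorem LinearIndependent.exists_linearMap_apply_eq_one {ι K V : Type*} [Field K]
    [AddCommGroup V] [Module K V] {v : ι → V} (hv : LinearIndependent K v) :
    ∃ f : V →ₗ[K] K, ∀ i, f (v i) = 1 := by
  obtain ⟨f, hf⟩ := LinearMap.exists_extend
    (Finsupp.linearCombination K (fun _ : ι => (1 : K)) ∘ₗ hv.repr)
  refine ⟨f, fun i => ?_⟩
  have := congr($hf ⟨v i, Submodule.subset_span (Set.mem_range_self i)⟩)
  simpa [hv.repr_eq_single i ⟨v i, _⟩ rfl] using this

namespace RSD

variable {ι V : Type*} [Fintype ι] [NormedAddCommGroup V] [InnerProductSpace ℝ V]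
  (R : RSD ι V)

/-- A linear functional extending the height of roots; off the span of the simple roots its
values are arbitrary. -/
noncomputable def height : V →ₗ[ℝ] ℝ :=
  R.sroot_indep.exists_linearMap_apply_eq_one.choose

theorem height_sroot (i : ι) : R.height (R.sroot i) = 1 :=
  R.sroot_indep.exists_linearMap_apply_eq_one.choose_spec i

theorem height_sum_smul_sroot (c : ι → ℕ) :
    R.height (∑ i, (c i : ℝ) • R.sroot i) = ∑ i, (c i : ℝ) := by
  simp [map_sum, height_sroot]

theorem height_eq_of_htIs {γ : V} {n : ℕ} (h : R.HtIs γ n) : R.height γ = n := by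
  obtain ⟨c, rfl, rfl⟩ := h
  rw [height_sum_smul_sroot, Nat.cast_sum]

theorem height_le_of_le {μ γ : V} (h : R.le μ γ) : R.height μ ≤ R.height γ := by
  obtain ⟨c, hc⟩ := h
  have : 0 ≤ R.height (γ - μ) := by
    rw [hc, height_sum_smul_sroot]
    positivity
  rwa [map_sub, sub_nonneg] at this

theorem ne_zero_of_mem {a : V} (ha : a ∈ R.Δ) : a ≠ 0 :=
  fun h => R.zero_not_mem (h ▸ ha)

theorem inner_self_pos_of_mem {a : V} (ha : a ∈ R.Δ) : 0 < ⟪a, a⟫ :=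
  real_inner_self_pos.mpr (R.ne_zero_of_mem ha)

theorem one_le_height {a : V} (ha : a ∈ R.pos) : 1 ≤ R.height a := by
  obtain ⟨c, hc⟩ := ha.2
  rw [hc, height_sum_smul_sroot, ← Nat.cast_sum, Nat.one_le_cast, Nat.one_le_iff_ne_zero]
  intro h0
  refine R.ne_zero_of_mem ha.1 ?_
  rw [hc, Finset.sum_eq_zero fun i hi => ?_]
  simp [Finset.sum_eq_zero_iff.mp h0 i hi]

theorem neg_notMem_pos {a : V} (ha : a ∈ R.pos) : -a ∉ R.pos := fun hna => by
  have := R.one_le_height hna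
  rw [map_neg] at this
  linarith [R.one_le_height ha]

theorem mem_pos_or_neg_mem_pos {a : V} (ha : a ∈ R.Δ) : a ∈ R.pos ∨ -a ∈ R.pos := by
  rcases R.decomp a ha with hc | ⟨c, hc⟩
  · exact Or.inl ⟨ha, hc⟩
  · exact Or.inr ⟨R.neg_mem a ha, c, by rw [hc, neg_neg]⟩

theorem sroot_mem_pos (i : ι) : R.sroot i ∈ R.pos := by
  classical
  exact ⟨R.sroot_mem i, Pi.single i 1, by simp [Pi.single_apply]⟩

theorem add_smul_mem_pos {a b : V} (ha : a ∈ R.pos) (hb : b ∈ R.pos) (m : ℕ)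
    (hmem : b + (m : ℝ) • a ∈ R.Δ) : b + (m : ℝ) • a ∈ R.pos := by
  obtain ⟨c, rfl⟩ := ha.2
  obtain ⟨d, rfl⟩ := hb.2
  refine ⟨hmem, fun i => d i + m * c i, ?_⟩
  simp only [Finset.smul_sum, smul_smul, ← Finset.sum_add_distrib, Nat.cast_add, Nat.cast_mul,
    add_smul]

theorem reflect_eq_sub_coroot {a : V} (ha : a ∈ R.Δ) (v : V) :
    R.reflect a v = v - ⟪v, R.coroot a⟫ • a := by
  rw [R.reflect_apply a ha, coroot, real_inner_smul_right, real_inner_comm]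
  ring_nf

theorem inner_self_coroot {a : V} (ha : a ∈ R.Δ) : ⟪a, R.coroot a⟫ = 2 := by
  rw [coroot, real_inner_smul_right, div_mul_cancel₀ _ (R.inner_self_pos_of_mem ha).ne']

theorem exists_int_inner_coroot {a b : V} (ha : a ∈ R.Δ) (hb : b ∈ R.Δ) :
    ∃ n : ℤ, ⟪b, R.coroot a⟫ = n := by
  obtain ⟨n, hn⟩ := R.crys a ha b hb
  refine ⟨n, ?_⟩
  rw [coroot, real_inner_smul_right, real_inner_comm a b, ← hn]
  ring

theorem inner_reflect_reflect {a : V} (ha : a ∈ R.Δ) (v w : V) :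
    ⟪R.reflect a v, R.reflect a w⟫ = ⟪v, w⟫ := by
  have hs := (R.inner_self_pos_of_mem ha).ne'
  simp only [R.reflect_apply a ha, inner_sub_left, inner_sub_right, real_inner_smul_left,
    real_inner_smul_right, real_inner_comm a]
  field_simp
  ring

theorem reflect_reflect {a : V} (ha : a ∈ R.Δ) (v : V) : R.reflect a (R.reflect a v) = v := by
  rw [R.reflect_eq_sub_coroot ha v, map_sub, map_smul, R.reflect_eq_sub_coroot ha v,
    R.reflect_eq_sub_coroot ha a, R.inner_self_coroot ha]
  module

theorem coroot_reflect {a : V} (ha : a ∈ R.Δ) (v : V) :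
    R.coroot (R.reflect a v) = R.reflect a (R.coroot v) := by
  rw [coroot, coroot, R.inner_reflect_reflect ha, map_smul]

theorem isLong_reflect {a γ : V} (ha : a ∈ R.Δ) (hγ : R.IsLong γ) :
    R.IsLong (R.reflect a γ) :=
  ⟨R.reflect_root_mem a ha γ hγ.1, fun b hb => by
    rw [R.inner_reflect_reflect ha]; exact hγ.2 b hb⟩

theorem exists_reflect_eq_add_smul {a b : V} (ha : a ∈ R.Δ) (hb : b ∈ R.Δ) (hab : ⟪b, a⟫ < 0) :
    ∃ m : ℕ, 1 ≤ m ∧ R.reflect a b = b + (m : ℝ) • a := by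
  obtain ⟨n, hn⟩ := R.exists_int_inner_coroot ha hb
  have hneg : (n : ℝ) < 0 := by
    rw [← hn, coroot, real_inner_smul_right]
    exact mul_neg_of_pos_of_neg (div_pos two_pos (R.inner_self_pos_of_mem ha)) hab
  have hn0 : n < 0 := by exact_mod_cast hneg
  obtain ⟨m, hm⟩ := Int.eq_ofNat_of_zero_le (by omega : (0 : ℤ) ≤ -n)
  refine ⟨m, by omega, ?_⟩
  have hmn : (m : ℝ) = -n := by exact_mod_cast hm.symm
  rw [R.reflect_eq_sub_coroot ha, hn, hmn]
  module

/-- A pairing `≤ -2` would give `⟪μ, γ⟫ ≤ -‖γ‖²`, hence `‖μ + γ‖² ≤ ‖μ‖² - ‖γ‖² ≤ 0`. -/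
theorem neg_one_le_inner_coroot {γ μ : V} (hγ : R.IsLong γ) (hμ : μ ∈ R.Δ) (hne : μ ≠ -γ) :
    -1 ≤ ⟪μ, R.coroot γ⟫ := by
  obtain ⟨n, hn⟩ := R.exists_int_inner_coroot hγ.1 hμ
  rw [hn]
  by_contra! hlt
  have hn2 : (n : ℝ) ≤ -2 := by
    have : n < -1 := by exact_mod_cast hlt
    exact_mod_cast (show n ≤ -2 by omega)
  have hg := R.inner_self_pos_of_mem hγ.1
  have hμγ : ⟪μ, γ⟫ ≤ -⟪γ, γ⟫ := by
    rw [← hn, coroot, real_inner_smul_right] at hn2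
    rw [div_mul_eq_mul_div, div_le_iff₀ hg] at hn2
    linarith
  refine hne (eq_neg_of_add_eq_zero_left (real_inner_self_nonpos.mp ?_))
  rw [real_inner_add_add_self]
  linarith [hγ.2 μ hμ]

theorem neg_one_le_inner_coroot_of_mem_pos {γ μ : V} (hγl : R.IsLong γ) (hγ : γ ∈ R.pos)
    (hμ : μ ∈ R.pos) : -1 ≤ ⟪μ, R.coroot γ⟫ :=
  R.neg_one_le_inner_coroot hγl hμ.1 fun h => R.neg_notMem_pos hγ (h ▸ hμ)

noncomputable def rootFinset : Finset V := R.finite.toFinset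

/-- The positive roots, as the finset summed over in the definition of `rho`. -/
noncomputable def posFinset : Finset V :=
  (R.finite.subset (fun _ ha => ha.1 : R.pos ⊆ R.Δ)).toFinset

@[simp] theorem mem_rootFinset {a : V} : a ∈ R.rootFinset ↔ a ∈ R.Δ :=
  Set.Finite.mem_toFinset _

@[simp] theorem mem_posFinset {a : V} : a ∈ R.posFinset ↔ a ∈ R.pos :=
  Set.Finite.mem_toFinset _

theorem inner_rho (v : V) : ⟪R.rho, v⟫ = 2⁻¹ * ∑ μ ∈ R.posFinset, ⟪μ, v⟫ := by
  rw [rho, real_inner_smul_left, sum_inner]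
  rfl

theorem sum_rootFinset_eq_two_mul {f : V → ℝ} (hf : ∀ v, f (-v) = f v) :
    ∑ μ ∈ R.rootFinset, f μ = 2 * ∑ μ ∈ R.posFinset, f μ := by
  classical
  have hsplit : R.rootFinset = R.posFinset ∪ R.posFinset.map (Equiv.neg V).toEmbedding := by
    ext μ
    simp only [mem_rootFinset, Finset.mem_union, mem_posFinset, Finset.mem_map_equiv,
      Equiv.neg_symm, Equiv.neg_apply]
    refine ⟨R.mem_pos_or_neg_mem_pos, ?_⟩
    rintro (h | h)
    · exact h.1
    · simpa using R.neg_mem _ h.1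
  have hdisj : Disjoint R.posFinset (R.posFinset.map (Equiv.neg V).toEmbedding) := by
    rw [Finset.disjoint_left]
    intro μ hμ hμ'
    simp only [mem_posFinset, Finset.mem_map_equiv, Equiv.neg_symm, Equiv.neg_apply] at hμ hμ'
    exact R.neg_notMem_pos hμ hμ'
  rw [hsplit, Finset.sum_union hdisj, Finset.sum_map]
  simp only [Equiv.coe_toEmbedding, Equiv.neg_apply, hf]
  ring

theorem sum_abs_inner_coroot_reflect {a : V} (ha : a ∈ R.Δ) (v : V) :
    ∑ μ ∈ R.rootFinset, |⟪μ, R.coroot (R.reflect a v)⟫| =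
      ∑ μ ∈ R.rootFinset, |⟪μ, R.coroot v⟫| := by
  refine Finset.sum_nbij' (R.reflect a) (R.reflect a) ?_ ?_ (fun μ _ => R.reflect_reflect ha μ)
    (fun μ _ => R.reflect_reflect ha μ) fun μ _ => ?_
  · simpa using R.reflect_root_mem a ha
  · simpa using R.reflect_root_mem a ha
  · rw [R.coroot_reflect ha, ← R.inner_reflect_reflect ha (R.reflect a μ), R.reflect_reflect ha]

theorem inner_sum_smul_sroot_nonneg {v : V} (hv : ∀ i, 0 ≤ ⟪v, R.sroot i⟫) (c : ι → ℕ) :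
    0 ≤ ⟪v, ∑ i, (c i : ℝ) • R.sroot i⟫ := by
  rw [inner_sum]
  exact Finset.sum_nonneg fun i _ => by
    rw [real_inner_smul_right]
    exact mul_nonneg (Nat.cast_nonneg _) (hv i)

/-- If `⟪θ, μ⟫ < 0`, then `s_μ θ = θ + m μ` would be a root above `θ`. -/
theorem inner_highest_nonneg {θ μ : V} (hθ : R.IsHighest θ) (hμ : μ ∈ R.pos) : 0 ≤ ⟪θ, μ⟫ := by
  by_contra! hneg
  obtain ⟨m, hm, hrefl⟩ := R.exists_reflect_eq_add_smul hμ.1 hθ.1.1 hneg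
  have hpos : θ + (m : ℝ) • μ ∈ R.pos :=
    R.add_smul_mem_pos hμ hθ.1 m (hrefl ▸ R.reflect_root_mem μ hμ.1 θ hθ.1.1)
  have hle := R.height_le_of_le (hθ.2 _ hpos)
  rw [map_add, map_smul, smul_eq_mul] at hle
  have hm' : (1 : ℝ) ≤ m := by exact_mod_cast hm
  nlinarith [R.one_le_height hμ]

theorem inner_coroot_highest_nonneg {θ μ : V} (hθ : R.IsHighest θ) (hμ : μ ∈ R.pos) :
    0 ≤ ⟪μ, R.coroot θ⟫ := by
  rw [coroot, real_inner_smul_right, real_inner_comm θ μ]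
  exact mul_nonneg (div_nonneg zero_le_two real_inner_self_nonneg) (R.inner_highest_nonneg hθ hμ)

theorem eq_highest_of_forall_inner_sroot_nonneg {θ γ : V} (hθ : R.IsHighest θ)
    (hγl : R.IsLong γ) (hγ : γ ∈ R.pos) (hdom : ∀ i, 0 ≤ ⟪γ, R.sroot i⟫) : γ = θ := by
  obtain ⟨e, he⟩ := hθ.2 γ hγ
  have hγ_nonneg : 0 ≤ ⟪γ, θ - γ⟫ := he ▸ R.inner_sum_smul_sroot_nonneg hdom e
  have hθ_nonneg : 0 ≤ ⟪θ, θ - γ⟫ :=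
    he ▸ R.inner_sum_smul_sroot_nonneg (fun i => R.inner_highest_nonneg hθ (R.sroot_mem_pos i)) e
  have hθγ : ⟪θ, θ⟫ ≤ ⟪γ, γ⟫ := hγl.2 θ hθ.1.1
  rw [inner_sub_right] at hγ_nonneg hθ_nonneg
  rw [real_inner_comm γ θ] at hθ_nonneg
  refine sub_eq_zero.mp (real_inner_self_nonpos.mp ?_)
  rw [real_inner_sub_sub_self]
  linarith

/-- A long positive root `γ ≠ θ` pairs negatively with some simple root `α_i` (a dominant one is
`θ`), and then `s_i γ` is a long positive root of larger height. -/
theorem isLong_induction {θ : V} (hθ : R.IsHighest θ) {P : V → Prop} (top : P θ)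
    (step : ∀ γ i, R.IsLong γ → γ ∈ R.pos → ⟪γ, R.sroot i⟫ < 0 →
      P (R.reflect (R.sroot i) γ) → P γ)
    {γ : V} (hγl : R.IsLong γ) (hγ : γ ∈ R.pos) : P γ := by
  obtain ⟨n, hn⟩ := exists_nat_gt (R.height θ - R.height γ)
  induction n generalizing γ with
  | zero =>
    have := R.height_le_of_le (hθ.2 γ hγ)
    push_cast at hn
    linarith
  | succ n ih =>
    by_cases hγθ : γ = θ
    · exact hγθ ▸ top
    obtain ⟨i, hi⟩ : ∃ i, ⟪γ, R.sroot i⟫ < 0 := by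
      by_contra! hdom
      exact hγθ (R.eq_highest_of_forall_inner_sroot_nonneg hθ hγl hγ hdom)
    obtain ⟨m, hm, hrefl⟩ := R.exists_reflect_eq_add_smul (R.sroot_mem i) hγl.1 hi
    have hlong := R.isLong_reflect (R.sroot_mem i) hγl
    refine step γ i hγl hγ hi (ih hlong ?_ ?_)
    · rw [hrefl] at hlong ⊢
      exact R.add_smul_mem_pos (R.sroot_mem_pos i) hγ m hlong.1
    · have hm' : (1 : ℝ) ≤ m := by exact_mod_cast hm
      rw [hrefl, map_add, map_smul, height_sroot, smul_eq_mul, mul_one]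
      push_cast at hn ⊢
      linarith

theorem sum_abs_inner_coroot_eq_highest {θ γ : V} (hθ : R.IsHighest θ) (hγl : R.IsLong γ)
    (hγ : γ ∈ R.pos) :
    ∑ μ ∈ R.rootFinset, |⟪μ, R.coroot γ⟫| = ∑ μ ∈ R.rootFinset, |⟪μ, R.coroot θ⟫| :=
  R.isLong_induction hθ (P := fun γ => ∑ μ ∈ R.rootFinset, |⟪μ, R.coroot γ⟫| = _) rfl
    (fun _ i _ _ _ h => by rwa [R.sum_abs_inner_coroot_reflect (R.sroot_mem i)] at h) hγl hγ

theorem ncard_Phi_eq_card_filter {γ : V} (hγl : R.IsLong γ) (hγ : γ ∈ R.pos) :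
    {ν ∈ R.pos | ν - γ ∈ R.pos}.ncard = (R.posFinset.filter (⟪·, R.coroot γ⟫ = -1)).card := by
  rw [← Set.ncard_coe_finset, ← Set.ncard_image_of_injective _ (sub_left_injective (b := γ))]
  congr 1
  ext μ
  simp only [Set.mem_image, Set.mem_ofPred_eq, Finset.coe_filter, mem_posFinset]
  constructor
  · rintro ⟨ν, ⟨hν, hνγ⟩, rfl⟩
    refine ⟨hνγ, le_antisymm ?_ (R.neg_one_le_inner_coroot_of_mem_pos hγl hγ hνγ)⟩
    have hν_le := R.neg_one_le_inner_coroot hγl (R.neg_mem ν hν.1)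
      fun h => R.ne_zero_of_mem hνγ.1 (by rw [neg_inj.mp h, sub_self])
    rw [inner_neg_left] at hν_le
    rw [inner_sub_left, R.inner_self_coroot hγl.1]
    linarith
  · rintro ⟨hμ, hμγ⟩
    have hrefl : R.reflect γ μ = μ + ((1 : ℕ) : ℝ) • γ := by
      rw [R.reflect_eq_sub_coroot hγl.1, hμγ]
      module
    refine ⟨μ + γ, ⟨?_, by simpa using hμ⟩, add_sub_cancel_right μ γ⟩
    simpa using R.add_smul_mem_pos hγ hμ 1 (hrefl ▸ R.reflect_root_mem γ hγl.1 μ hμ.1)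

/-- For a long positive root `γ` the pairings `⟪μ, γ∨⟫`, `μ ∈ Δ⁺`, are integers `≥ -1`, so
`(|x| - x) / 2` counts exactly those equal to `-1`. -/
theorem card_filter_inner_coroot_eq_neg_one {γ : V} (hγl : R.IsLong γ) (hγ : γ ∈ R.pos) :
    ((R.posFinset.filter (⟪·, R.coroot γ⟫ = -1)).card : ℝ) =
      2⁻¹ * ∑ μ ∈ R.posFinset, (|⟪μ, R.coroot γ⟫| - ⟪μ, R.coroot γ⟫) := by
  rw [Finset.natCast_card_filter, Finset.mul_sum]
  refine Finset.sum_congr rfl fun μ hμ => ?_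
  rw [mem_posFinset] at hμ
  have hge := R.neg_one_le_inner_coroot_of_mem_pos hγl hγ hμ
  obtain ⟨n, hn⟩ := R.exists_int_inner_coroot hγl.1 hμ.1
  rw [hn] at hge ⊢
  have hge' : -1 ≤ n := by exact_mod_cast hge
  rcases (by omega : n = -1 ∨ 0 ≤ n) with rfl | hn0
  · norm_num
  · have hne : (n : ℝ) ≠ -1 := by exact_mod_cast (by omega : n ≠ -1)
    rw [if_neg hne, abs_of_nonneg (by exact_mod_cast hn0)]
    ring

theorem ncard_Phi_add_inner_rho_coroot {γ : V} (hγl : R.IsLong γ) (hγ : γ ∈ R.pos) :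
    ({ν ∈ R.pos | ν - γ ∈ R.pos}.ncard : ℝ) + ⟪R.rho, R.coroot γ⟫ =
      4⁻¹ * ∑ μ ∈ R.rootFinset, |⟪μ, R.coroot γ⟫| := by
  rw [R.ncard_Phi_eq_card_filter hγl hγ, R.card_filter_inner_coroot_eq_neg_one hγl hγ,
    R.inner_rho, R.sum_rootFinset_eq_two_mul fun v => by rw [inner_neg_left, abs_neg],
    Finset.sum_sub_distrib]
  ring

theorem inner_rho_coroot_highest {θ : V} (hθ : R.IsHighest θ) :
    ⟪R.rho, R.coroot θ⟫ = 4⁻¹ * ∑ μ ∈ R.rootFinset, |⟪μ, R.coroot θ⟫| := by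
  rw [R.inner_rho, R.sum_rootFinset_eq_two_mul fun v => by rw [inner_neg_left, abs_neg],
    Finset.sum_congr rfl fun μ hμ =>
      abs_of_nonneg (R.inner_coroot_highest_nonneg hθ (R.mem_posFinset.mp hμ))]
  ring

theorem isLong_of_simplyLaced (hsl : R.SimplyLaced) {a : V} (ha : a ∈ R.Δ) : R.IsLong a :=
  ⟨ha, fun b hb => (hsl b hb a ha).le⟩

/-- The only case needing care is `⟪μ, α_i∨⟫ = 1`: were `μ - α_i` negative, `α_i = μ + (α_i - μ)`
would have height at least `2`. -/
theorem reflect_sroot_mem_pos {i : ι} (hl : R.IsLong (R.sroot i)) {μ : V} (hμ : μ ∈ R.pos)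
    (hne : μ ≠ R.sroot i) : R.reflect (R.sroot i) μ ∈ R.pos := by
  have hα := R.sroot_mem_pos i
  have hle := R.neg_one_le_inner_coroot hl (R.neg_mem μ hμ.1) (by rwa [ne_eq, neg_inj])
  have hge := R.neg_one_le_inner_coroot_of_mem_pos hl hα hμ
  have hmem := R.reflect_root_mem _ hl.1 μ hμ.1
  obtain ⟨n, hn⟩ := R.exists_int_inner_coroot hl.1 hμ.1
  rw [inner_neg_left, hn] at hle
  rw [hn] at hge
  rw [R.reflect_eq_sub_coroot hl.1, hn] at hmem ⊢
  have hle' : n ≤ 1 := by exact_mod_cast (by linarith : (n : ℝ) ≤ 1)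
  have hge' : -1 ≤ n := by exact_mod_cast hge
  rcases (by omega : n = -1 ∨ n = 0 ∨ n = 1) with rfl | rfl | rfl
  · simpa using R.add_smul_mem_pos hα hμ 1 (by simpa using hmem)
  · simpa using hμ
  · refine (R.mem_pos_or_neg_mem_pos hmem).resolve_right fun hneg => ?_
    have := R.one_le_height hneg
    simp only [Int.cast_one, one_smul, neg_sub, map_sub, height_sroot] at this
    linarith [R.one_le_height hμ]

theorem inner_rho_coroot_sroot {i : ι} (hl : R.IsLong (R.sroot i)) :
    ⟪R.rho, R.coroot (R.sroot i)⟫ = 1 := by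
  classical
  have hα : R.sroot i ∈ R.posFinset := R.mem_posFinset.mpr (R.sroot_mem_pos i)
  have hflip : ∑ μ ∈ R.posFinset.erase (R.sroot i), ⟪μ, R.coroot (R.sroot i)⟫ =
      ∑ μ ∈ R.posFinset.erase (R.sroot i), -⟪μ, R.coroot (R.sroot i)⟫ := by
    have hmaps : ∀ μ ∈ R.posFinset.erase (R.sroot i),
        R.reflect (R.sroot i) μ ∈ R.posFinset.erase (R.sroot i) := by
      intro μ hμ
      rw [Finset.mem_erase, mem_posFinset] at hμ ⊢
      refine ⟨fun h => R.neg_notMem_pos (R.sroot_mem_pos i) ?_, R.reflect_sroot_mem_pos hl hμ.2 hμ.1⟩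
      have hμα := congrArg (R.reflect (R.sroot i)) h
      rw [R.reflect_reflect hl.1, R.reflect_eq_sub_coroot hl.1, R.inner_self_coroot hl.1] at hμα
      convert hμ.2 using 1
      rw [hμα]
      module
    refine Finset.sum_nbij' (R.reflect (R.sroot i)) (R.reflect (R.sroot i)) hmaps hmaps
      (fun μ _ => R.reflect_reflect hl.1 μ) (fun μ _ => R.reflect_reflect hl.1 μ) fun μ _ => ?_
    rw [R.reflect_eq_sub_coroot hl.1, inner_sub_left, real_inner_smul_left, R.inner_self_coroot hl.1]
    ring
  rw [Finset.sum_neg_distrib] at hflip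
  rw [R.inner_rho, ← Finset.add_sum_erase _ _ hα, R.inner_self_coroot hl.1]
  linarith

theorem inner_rho_coroot_eq_height (hsl : R.SimplyLaced) {γ : V} (hγ : γ ∈ R.pos) :
    ⟪R.rho, R.coroot γ⟫ = R.height γ := by
  have hs := (R.inner_self_pos_of_mem hγ.1).ne'
  have hρα : ∀ i, ⟪R.rho, R.sroot i⟫ = ⟪γ, γ⟫ / 2 := fun i => by
    have h := R.inner_rho_coroot_sroot (R.isLong_of_simplyLaced hsl (R.sroot_mem i))
    rw [coroot, real_inner_smul_right, hsl _ (R.sroot_mem i) γ hγ.1] at h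
    field_simp at h
    linarith
  obtain ⟨c, hc⟩ := hγ.2
  have hheight : R.height γ = ∑ i, (c i : ℝ) := by rw [hc, height_sum_smul_sroot]
  have hργ : ⟪R.rho, γ⟫ = ∑ i, (c i : ℝ) * (⟪γ, γ⟫ / 2) := by
    conv_lhs => rw [hc]
    simp only [inner_sum, real_inner_smul_right, hρα]
  rw [coroot, real_inner_smul_right, hργ, ← Finset.sum_mul, hheight]
  field_simp

end RSD

/-- For a long positive root `γ`,
`#{ν ∈ Δ⁺ ∣ ν - γ ∈ Δ⁺} = (ρ,θ∨) - (ρ,γ∨)`; in the simply-laced case this equals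
`ht(θ) - ht(γ)`. -/
theorem card_Phi_eq
    {ι V : Type*} [Fintype ι] [NormedAddCommGroup V] [InnerProductSpace ℝ V]
    (R : RSD ι V) (γ θ : V) (hγl : R.IsLong γ) (hγ : γ ∈ R.pos)
    (hθ : R.IsHighest θ) :
    (({ν ∈ R.pos | ν - γ ∈ R.pos}.ncard : ℝ)
        = ⟪R.rho, R.coroot θ⟫ - ⟪R.rho, R.coroot γ⟫) ∧
      (R.SimplyLaced → ∀ nθ nγ : ℕ, R.HtIs θ nθ → R.HtIs γ nγ →
        {ν ∈ R.pos | ν - γ ∈ R.pos}.ncard = nθ - nγ) := by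
  have hcard : ({ν ∈ R.pos | ν - γ ∈ R.pos}.ncard : ℝ) =
      ⟪R.rho, R.coroot θ⟫ - ⟪R.rho, R.coroot γ⟫ := by
    have h := R.ncard_Phi_add_inner_rho_coroot hγl hγ
    rw [R.sum_abs_inner_coroot_eq_highest hθ hγl hγ, ← R.inner_rho_coroot_highest hθ] at h
    linarith
  refine ⟨hcard, fun hsl nθ nγ hnθ hnγ => ?_⟩
  rw [R.inner_rho_coroot_eq_height hsl hθ.1, R.inner_rho_coroot_eq_height hsl hγ,
    R.height_eq_of_htIs hnθ, R.height_eq_of_htIs hnγ] at hcard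
  have h : {ν ∈ R.pos | ν - γ ∈ R.pos}.ncard + nγ = nθ := by
    exact_mod_cast (by linarith : ({ν ∈ R.pos | ν - γ ∈ R.pos}.ncard : ℝ) + nγ = nθ)
  omega
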